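/- (Step 2 of Bouten–van Handel / quantum Bayes formula.) Let ρ be a faithful density operator, Z a commutative subalgebra, F ∈ Z′ with E[U*XU] = E[F*XF] for all X ∈ Z′ where ρ′ = UρU*. If E[F*F|Z] is invertible, then E′[X|Z] = E[F*F|Z]^{-1} E[F*XF|Z] for all X ∈ Z′. -/

import Mathlib

open Matrix ComplexOrder

/-!
Write `G = E[F*F|Z]` and `Y = E′[X|Z]`. For `W ∈ Z`, the elements `YW` and `XW` lie in the
commutant `Z′` (as `Z` is commutative), so the reference property transports the `ρ′`-expectation
defining `Y` back to `ρ`: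
`tr(ρ GYW) = tr(ρ F*(YW)F) = tr(ρ′ YW) = tr(ρ′ XW) = tr(ρ F*(XW)F) = tr(ρ E[F*XF|Z] W)`.
Hence `GY` and `E[F*XF|Z]` are elements of `Z` with the same `ρ`-weighted traces against `Z`;
faithfulness of `ρ` forces `GY = E[F*XF|Z]`, and inverting `G` gives the formula.
-/

namespace Matrix

variable {m 𝕜 : Type*} [Fintype m] [RCLike 𝕜]

/-- `A ↦ tr(ρ A Aᴴ)` is the squared norm of `Aᴴ` for the inner product `⟪x, y⟫ = tr(y ρ xᴴ)`. -/
theorem PosDef.eq_zero_of_trace_mul_mul_conjTranspose_eq_zero {ρ A : Matrix m m 𝕜}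
    (hρ : ρ.PosDef) (h : (ρ * A * Aᴴ).trace = 0) : A = 0 := by
  let := ρ.toMatrixNormedAddCommGroup hρ
  let := ρ.toMatrixInnerProductSpace hρ.posSemidef
  have hinner : inner 𝕜 Aᴴ Aᴴ = (0 : 𝕜) := by
    change (Aᴴ * ρ * Aᴴᴴ).trace = 0
    rwa [conjTranspose_conjTranspose, trace_mul_comm, ← mul_assoc, trace_mul_comm, ← mul_assoc]
  simpa using inner_self_eq_zero.1 hinner

theorem PosDef.eq_of_forall_trace_mul_mul_eq [DecidableEq m] {ρ A B : Matrix m m 𝕜}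
    (hρ : ρ.PosDef) {Z : StarSubalgebra 𝕜 (Matrix m m 𝕜)} (hA : A ∈ Z) (hB : B ∈ Z)
    (h : ∀ W ∈ Z, (ρ * A * W).trace = (ρ * B * W).trace) : A = B := by
  have hD : (A - B)ᴴ ∈ Z := star_mem (sub_mem hA hB)
  refine sub_eq_zero.1 (hρ.eq_zero_of_trace_mul_mul_conjTranspose_eq_zero ?_)
  rw [mul_sub, sub_mul, trace_sub, h _ hD, sub_self]

theorem trace_mul_mul_conjTranspose_mul (U ρ A : Matrix m m 𝕜) :
    (U * ρ * Uᴴ * A).trace = (ρ * (Uᴴ * A * U)).trace := by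
  rw [mul_assoc, mul_assoc, trace_mul_comm]
  simp only [mul_assoc]

end Matrix

section QuantumBayes

variable {m 𝕜 : Type*} [Fintype m] [DecidableEq m] [RCLike 𝕜] {ρ U F : Matrix m m 𝕜}
  {Z : StarSubalgebra 𝕜 (Matrix m m 𝕜)}

theorem commute_mul_of_commute_of_mem {A W : Matrix m m 𝕜}
    (hZcomm : ∀ W₁ ∈ Z, ∀ W₂ ∈ Z, W₁ * W₂ = W₂ * W₁) (hA : ∀ W' ∈ Z, Commute W' A) (hW : W ∈ Z) :
    ∀ W' ∈ Z, Commute W' (A * W) :=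
  fun W' hW' => (hA W' hW').mul_right (hZcomm W' hW' W hW)

theorem trace_condExp_mul_condExp'_eq_trace_condExp_conj
    (hZcomm : ∀ W₁ ∈ Z, ∀ W₂ ∈ Z, W₁ * W₂ = W₂ * W₁) (hF : ∀ W ∈ Z, Commute W F)
    (hrep : ∀ X : Matrix m m 𝕜, (∀ W ∈ Z, Commute W X) →
      (ρ * (Uᴴ * X * U)).trace = (ρ * (Fᴴ * X * F)).trace)
    {CE : Matrix m m 𝕜 → Matrix m m 𝕜}
    (hCE : ∀ A, ∀ W ∈ Z, (ρ * CE A * W).trace = (ρ * A * W).trace)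
    {CE' : Matrix m m 𝕜 → Matrix m m 𝕜} (hCE'mem : ∀ A, CE' A ∈ Z)
    (hCE' : ∀ A, ∀ W ∈ Z, (U * ρ * Uᴴ * CE' A * W).trace = (U * ρ * Uᴴ * A * W).trace)
    {X : Matrix m m 𝕜} (hX : ∀ W ∈ Z, Commute W X) {W : Matrix m m 𝕜} (hW : W ∈ Z) :
    (ρ * (CE (Fᴴ * F) * CE' X) * W).trace = (ρ * CE (Fᴴ * X * F) * W).trace := by
  have hYW : CE' X * W ∈ Z := mul_mem (hCE'mem X) hW
  have hYWcomm : ∀ W' ∈ Z, Commute W' (CE' X * W) := fun W' hW' => hZcomm W' hW' _ hYW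
  calc (ρ * (CE (Fᴴ * F) * CE' X) * W).trace
      = (ρ * CE (Fᴴ * F) * (CE' X * W)).trace := by simp only [mul_assoc]
    _ = (ρ * (Fᴴ * F) * (CE' X * W)).trace := hCE _ _ hYW
    _ = (ρ * (Fᴴ * (CE' X * W) * F)).trace := by
        rw [mul_assoc ρ, mul_assoc Fᴴ, ← (hF _ hYW).eq, ← mul_assoc Fᴴ]
    _ = (U * ρ * Uᴴ * (CE' X * W)).trace := by
        rw [← hrep _ hYWcomm, trace_mul_mul_conjTranspose_mul]
    _ = (U * ρ * Uᴴ * (X * W)).trace := by simpa only [mul_assoc] using hCE' X W hW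
    _ = (ρ * (Fᴴ * (X * W) * F)).trace := by
        rw [trace_mul_mul_conjTranspose_mul, hrep _ (commute_mul_of_commute_of_mem hZcomm hX hW)]
    _ = (ρ * (Fᴴ * X * F) * W).trace := by simp only [mul_assoc, (hF W hW).eq]
    _ = (ρ * CE (Fᴴ * X * F) * W).trace := (hCE _ _ hW).symm

end QuantumBayes

theorem bouten_van_handel_step2_general {n : ℕ}
    (ρ : Matrix (Fin n) (Fin n) ℂ) (hρ : ρ.PosDef)
    (U : Matrix (Fin n) (Fin n) ℂ)
    (Z : StarSubalgebra ℂ (Matrix (Fin n) (Fin n) ℂ))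
    (hZcomm : ∀ W₁ ∈ Z, ∀ W₂ ∈ Z, W₁ * W₂ = W₂ * W₁)
    (F : Matrix (Fin n) (Fin n) ℂ)
    (hF : ∀ W ∈ Z, Commute W F)
    (hrep : ∀ X : Matrix (Fin n) (Fin n) ℂ, (∀ W ∈ Z, Commute W X) →
      (ρ * (Uᴴ * X * U)).trace = (ρ * (Fᴴ * X * F)).trace)
    -- `CE` : conditional expectation onto `Z` w.r.t. `ρ`
    (CE : Matrix (Fin n) (Fin n) ℂ → Matrix (Fin n) (Fin n) ℂ)
    (hCEmem : ∀ A, CE A ∈ Z)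
    (hCE : ∀ A, ∀ W ∈ Z, (ρ * CE A * W).trace = (ρ * A * W).trace)
    -- `CE'` : conditional expectation onto `Z` w.r.t. the rotated state `ρ' = UρU*`
    (CE' : Matrix (Fin n) (Fin n) ℂ → Matrix (Fin n) (Fin n) ℂ)
    (hCE'mem : ∀ A, CE' A ∈ Z)
    (hCE' : ∀ A, ∀ W ∈ Z,
      (U * ρ * Uᴴ * CE' A * W).trace = (U * ρ * Uᴴ * A * W).trace)
    (hinv : IsUnit (CE (Fᴴ * F))) :
    ∀ X : Matrix (Fin n) (Fin n) ℂ, (∀ W ∈ Z, Commute W X) →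
      CE' X = (CE (Fᴴ * F))⁻¹ * CE (Fᴴ * X * F) := by
  intro X hX
  have hGY : CE (Fᴴ * F) * CE' X = CE (Fᴴ * X * F) :=
    hρ.eq_of_forall_trace_mul_mul_eq (mul_mem (hCEmem _) (hCE'mem X)) (hCEmem _) fun _ hW =>
      trace_condExp_mul_condExp'_eq_trace_condExp_conj hZcomm hF hrep hCE hCE'mem hCE' hX hW
  rw [← hGY, ← mul_assoc, nonsing_inv_mul _ ((isUnit_iff_isUnit_det _).1 hinv), one_mul]

/-- (Step 2 of Bouten–van Handel / quantum Bayes formula.) Let `ρ` be a faithful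
density matrix, `Z` a commutative *-subalgebra, `F` in the commutant of `Z` with
`tr(ρ U*XU) = tr(ρ F*XF)` for all `X` in the commutant (i.e. the reference
vector property w.r.t. the rotated state `ρ′ = UρU*`). If `E[F*F|Z]` is
invertible then `E′[X|Z] = E[F*F|Z]⁻¹ E[F*XF|Z]` for all `X` in the commutant. -/
theorem bouten_van_handel_step2 {n : ℕ}
    (ρ : Matrix (Fin n) (Fin n) ℂ) (hρ : ρ.PosDef) (hρtr : ρ.trace = 1)
    (U : Matrix (Fin n) (Fin n) ℂ) (hU : U ∈ Matrix.unitaryGroup (Fin n) ℂ)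
    (Z : StarSubalgebra ℂ (Matrix (Fin n) (Fin n) ℂ))
    (hZcomm : ∀ W₁ ∈ Z, ∀ W₂ ∈ Z, W₁ * W₂ = W₂ * W₁)
    (F : Matrix (Fin n) (Fin n) ℂ)
    (hF : ∀ W ∈ Z, Commute W F)
    (hrep : ∀ X : Matrix (Fin n) (Fin n) ℂ, (∀ W ∈ Z, Commute W X) →
      (ρ * (Uᴴ * X * U)).trace = (ρ * (Fᴴ * X * F)).trace)
    -- `CE` : conditional expectation onto `Z` w.r.t. `ρ`
    (CE : Matrix (Fin n) (Fin n) ℂ → Matrix (Fin n) (Fin n) ℂ)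
    (hCEmem : ∀ A, CE A ∈ Z)
    (hCE : ∀ A, ∀ W ∈ Z, (ρ * CE A * W).trace = (ρ * A * W).trace)
    -- `CE'` : conditional expectation onto `Z` w.r.t. the rotated state `ρ' = UρU*`
    (CE' : Matrix (Fin n) (Fin n) ℂ → Matrix (Fin n) (Fin n) ℂ)
    (hCE'mem : ∀ A, CE' A ∈ Z)
    (hCE' : ∀ A, ∀ W ∈ Z,
      (U * ρ * Uᴴ * CE' A * W).trace = (U * ρ * Uᴴ * A * W).trace)
    (hinv : IsUnit (CE (Fᴴ * F))) :
    ∀ X : Matrix (Fin n) (Fin n) ℂ, (∀ W ∈ Z, Commute W X) →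
      CE' X = (CE (Fᴴ * F))⁻¹ * CE (Fᴴ * X * F) :=
  bouten_van_handel_step2_general ρ hρ U Z hZcomm F hF hrep CE hCEmem hCE CE' hCE'mem hCE' hinv
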